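/- arXiv:2505.02578 — 3 statements merged into one kernel-verified Lean document; each statement's English description precedes it below -/
import Mathlib

section
/- Let G be an internally completed weighted graph with external vertices labelled 0,…,N−1 of weighted degrees N₀,…,N_{N−1} and internal vertex set W. Let z₀,…,z_{N−1} ∈ ℝ^D ∖ {0} and x_v ∈ ℝ^D ∖ {0} for v ∈ W be positions such that the two endpoint positions of every edge are distinct. Write ỹ = y/‖y‖² for the inversion of a nonzero point. Then the following pointwise identity of positive reals holds: ∏_{e∈E(G)} p_e evaluated at the inverted positions (x̃_v for internal, z̃_i for external endpoints) equals (∏_{v∈W} ‖x_v‖^{2D}) · (∏_{i=0}^{N−1} ‖z_i‖^{2λN_i}) · ∏_{e∈E(G)} p_e evaluated at the original positions. -/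
noncomputable section

/-- A weighted graph with `N` external vertices (labelled by `Fin N`) and a
finite set `W` of internal vertices.  Edges form a finite type `E`; each edge
joins two distinct vertices and carries a real weight `ν e`. -/
structure FeynGraph (N : ℕ) where
  W : Type
  [fintypeW : Fintype W]
  [decW : DecidableEq W]
  E : Type
  [fintypeE : Fintype E]
  ends : E → (Fin N ⊕ W) × (Fin N ⊕ W)
  ne_ends : ∀ e, (ends e).1 ≠ (ends e).2
  ν : E → ℝ

open MeasureTheory ENNReal

namespace FeynGraph

attribute [instance] fintypeW decW fintypeE

variable {N : ℕ}

/-- Weighted degree of a vertex: the sum of the weights of the incident edges. -/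
def wdeg (G : FeynGraph N) (v : Fin N ⊕ G.W) : ℝ :=
  ∑ e : G.E, ((if (G.ends e).1 = v then G.ν e else 0) +
              (if (G.ends e).2 = v then G.ν e else 0))

/-- `G` is internally completed if every internal vertex has weighted degree `D/λ`. -/
def InternallyCompleted (lam D : ℕ) (G : FeynGraph N) : Prop :=
  ∀ w : G.W, G.wdeg (Sum.inr w) = (D : ℝ) / (lam : ℝ)

end FeynGraph

/-- The position-space propagator `p_e(x,y) = ‖x-y‖^(-2λν_e)`, valued in `[0,∞]`. -/
def prp (lam : ℕ) {D : ℕ} (w : ℝ) (x y : EuclideanSpace ℝ (Fin D)) : ℝ≥0∞ :=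
  (ENNReal.ofReal ‖x - y‖) ^ (-(2 * (lam : ℝ) * w))

/-- The position-space Feynman integral `A_G(z_0,…,z_{N-1})`. -/
def FeynGraph.A (lam D : ℕ) {N : ℕ} (G : FeynGraph N)
    (z : Fin N → EuclideanSpace ℝ (Fin D)) : ℝ≥0∞ :=
  ∫⁻ x : G.W → EuclideanSpace ℝ (Fin D),
    (∏ e : G.E, prp lam (G.ν e) (Sum.elim z x (G.ends e).1) (Sum.elim z x (G.ends e).2)) *
      (ENNReal.ofReal (Real.pi ^ (-(D : ℝ) / 2))) ^ (Fintype.card G.W)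

/-! Inversion `y ↦ y / ‖y‖²` rescales distances by `‖ã - b̃‖ = ‖a - b‖ / (‖a‖ ‖b‖)`, so the
propagator of an edge `e = ab` picks up the factor `‖a‖^(2λν_e) ‖b‖^(2λν_e)`. Collecting these
factors at the vertices gives `‖y_v‖^(2λ N_v)`, which for an internal vertex is `‖x_v‖^(2D)`
because `N_v = D/λ`. -/

theorem ENNReal.rpow_sum_of_ne_zero_of_ne_top {ι : Type*} {x : ℝ≥0∞} (hx₀ : x ≠ 0)
    (hx : x ≠ ⊤) (s : Finset ι) (f : ι → ℝ) : x ^ (∑ i ∈ s, f i) = ∏ i ∈ s, x ^ f i := by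
  classical
  induction s using Finset.induction_on with
  | empty => simp
  | insert i s hi ih => rw [Finset.sum_insert hi, Finset.prod_insert hi, rpow_add _ _ hx₀ hx, ih]

theorem norm_inv_norm_sq_smul_sub {F : Type*} [NormedAddCommGroup F] [InnerProductSpace ℝ F]
    {a b : F} (ha : a ≠ 0) (hb : b ≠ 0) :
    ‖(‖a‖ ^ 2)⁻¹ • a - (‖b‖ ^ 2)⁻¹ • b‖ = ‖a - b‖ / (‖a‖ * ‖b‖) := by
  simpa [dist_eq_norm, div_eq_inv_mul] using dist_div_norm_sq_smul ha hb 1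

theorem prp_inv_norm_sq_smul (lam : ℕ) {D : ℕ} (w : ℝ) {a b : EuclideanSpace ℝ (Fin D)}
    (ha : a ≠ 0) (hb : b ≠ 0) :
    prp lam w ((‖a‖ ^ 2)⁻¹ • a) ((‖b‖ ^ 2)⁻¹ • b) =
      ENNReal.ofReal ‖a‖ ^ (2 * (lam : ℝ) * w) * ENNReal.ofReal ‖b‖ ^ (2 * (lam : ℝ) * w) *
        prp lam w a b := by
  have hab : 0 < ‖a‖ * ‖b‖ := by positivity
  rw [prp, prp, norm_inv_norm_sq_smul_sub ha hb, ENNReal.ofReal_div_of_pos hab, div_eq_mul_inv,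
    ENNReal.mul_rpow_of_ne_top ENNReal.ofReal_ne_top
      (ENNReal.inv_ne_top.2 (ENNReal.ofReal_pos.2 hab).ne'), ENNReal.inv_rpow,
    ← ENNReal.rpow_neg, neg_neg, ENNReal.ofReal_mul (norm_nonneg a),
    ENNReal.mul_rpow_of_ne_top ENNReal.ofReal_ne_top ENNReal.ofReal_ne_top, mul_comm]

theorem FeynGraph.prod_edges_rpow_eq_prod_rpow_wdeg {N : ℕ} (G : FeynGraph N)
    (c : Fin N ⊕ G.W → ℝ≥0∞) (hc₀ : ∀ v, c v ≠ 0) (hc : ∀ v, c v ≠ ⊤) (t : ℝ) :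
    ∏ e : G.E, c (G.ends e).1 ^ (t * G.ν e) * c (G.ends e).2 ^ (t * G.ν e) =
      ∏ v, c v ^ (t * G.wdeg v) := by
  have hsplit : ∀ v e, c v ^ (t * ((if (G.ends e).1 = v then G.ν e else 0) +
      (if (G.ends e).2 = v then G.ν e else 0))) =
      (if (G.ends e).1 = v then c v ^ (t * G.ν e) else 1) *
        (if (G.ends e).2 = v then c v ^ (t * G.ν e) else 1) := by
    intro v e
    rw [mul_add, ENNReal.rpow_add _ _ (hc₀ v) (hc v)]
    congr 1 <;> split_ifs <;> simp
  simp_rw [FeynGraph.wdeg, Finset.mul_sum, ENNReal.rpow_sum_of_ne_zero_of_ne_top (hc₀ _) (hc _),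
    hsplit]
  rw [Finset.prod_comm]
  simp only [Finset.prod_mul_distrib, Finset.prod_ite_eq, Finset.mem_univ, if_true]

theorem statement8_general (lam : ℕ) (hlam : 1 ≤ lam) (D : ℕ)
    (N : ℕ) (G : FeynGraph N) (hG : G.InternallyCompleted lam D)
    (z : Fin N → EuclideanSpace ℝ (Fin D)) (x : G.W → EuclideanSpace ℝ (Fin D))
    (hz : ∀ i, z i ≠ 0) (hx : ∀ w, x w ≠ 0) :
    (∏ e : G.E, prp lam (G.ν e)
        ((‖Sum.elim z x (G.ends e).1‖ ^ 2)⁻¹ • Sum.elim z x (G.ends e).1)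
        ((‖Sum.elim z x (G.ends e).2‖ ^ 2)⁻¹ • Sum.elim z x (G.ends e).2)) =
      (∏ w : G.W, (ENNReal.ofReal ‖x w‖) ^ (2 * (D : ℝ))) *
      (∏ i : Fin N,
        (ENNReal.ofReal ‖z i‖) ^ (2 * (lam : ℝ) * G.wdeg (Sum.inl i))) *
      (∏ e : G.E, prp lam (G.ν e)
        (Sum.elim z x (G.ends e).1) (Sum.elim z x (G.ends e).2)) := by
  have hf : ∀ v, Sum.elim z x v ≠ 0 := by rintro (i | w); exacts [hz i, hx w]
  have hinternal : ∀ w, 2 * (lam : ℝ) * G.wdeg (Sum.inr w) = 2 * D := fun w => by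
    rw [hG w]; field_simp [Nat.cast_ne_zero.2 (by omega : lam ≠ 0)]
  calc _ = ∏ e : G.E, (ENNReal.ofReal ‖Sum.elim z x (G.ends e).1‖ ^ (2 * (lam : ℝ) * G.ν e) *
          ENNReal.ofReal ‖Sum.elim z x (G.ends e).2‖ ^ (2 * (lam : ℝ) * G.ν e)) *
          prp lam (G.ν e) (Sum.elim z x (G.ends e).1) (Sum.elim z x (G.ends e).2) :=
        Finset.prod_congr rfl fun e _ => prp_inv_norm_sq_smul lam (G.ν e) (hf _) (hf _)
    _ = (∏ v, ENNReal.ofReal ‖Sum.elim z x v‖ ^ (2 * (lam : ℝ) * G.wdeg v)) *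
          ∏ e : G.E, prp lam (G.ν e) (Sum.elim z x (G.ends e).1) (Sum.elim z x (G.ends e).2) := by
        rw [Finset.prod_mul_distrib]
        congr 1
        exact G.prod_edges_rpow_eq_prod_rpow_wdeg (fun v => ENNReal.ofReal ‖Sum.elim z x v‖)
          (fun v => by simpa using hf v) (fun _ => ENNReal.ofReal_ne_top) _
    _ = _ := by
        rw [Fintype.prod_sum_type, mul_comm (∏ i : Fin N, _)]
        simp only [Sum.elim_inl, Sum.elim_inr, hinternal]

/-- pointwise inversion identity for the product of propagators of
an internally completed graph. -/
theorem statement8 (lam : ℕ) (hlam : 1 ≤ lam) (D : ℕ) (hD : D = 2 * lam + 2)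
    (N : ℕ) (G : FeynGraph N) (hG : G.InternallyCompleted lam D)
    (z : Fin N → EuclideanSpace ℝ (Fin D)) (x : G.W → EuclideanSpace ℝ (Fin D))
    (hz : ∀ i, z i ≠ 0) (hx : ∀ w, x w ≠ 0)
    (hne : ∀ e : G.E,
      Sum.elim z x (G.ends e).1 ≠ Sum.elim z x (G.ends e).2) :
    (∏ e : G.E, prp lam (G.ν e)
        ((‖Sum.elim z x (G.ends e).1‖ ^ 2)⁻¹ • Sum.elim z x (G.ends e).1)
        ((‖Sum.elim z x (G.ends e).2‖ ^ 2)⁻¹ • Sum.elim z x (G.ends e).2)) =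
      (∏ w : G.W, (ENNReal.ofReal ‖x w‖) ^ (2 * (D : ℝ))) *
      (∏ i : Fin N,
        (ENNReal.ofReal ‖z i‖) ^ (2 * (lam : ℝ) * G.wdeg (Sum.inl i))) *
      (∏ e : G.E, prp lam (G.ν e)
        (Sum.elim z x (G.ends e).1) (Sum.elim z x (G.ends e).2)) :=
  statement8_general lam hlam D N G hG z x hz hx
end
end

section
/- Let D ≥ 1 be an integer. For every measurable function f : ℝ^D → [0,∞], the change of variables under the inversion x ↦ x/‖x‖² holds: ∫_{ℝ^D} f(x/‖x‖²) · ‖x‖^{−2D} dx = ∫_{ℝ^D} f(x) dx, where the integrand on the left is interpreted as 0 at x = 0 and both integrals are Lebesgue integrals of nonnegative functions valued in [0,∞]. -/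
/-!
The inversion in a sphere of radius `R` about `c` is an involution of the complement of `c`, and
its derivative at `x` is `(R / ‖x - c‖)²` times a reflection, so its Jacobian has absolute value
`(R / ‖x - c‖)^(2 * dim)`. The change of variables formula on the complement of the null set `{c}`
then gives the identity.
-/

open MeasureTheory ENNReal

open scoped Classical

open EuclideanGeometry Module

section

variable {E : Type*} [NormedAddCommGroup E] [InnerProductSpace ℝ E]

theorem inversion_zero_one_apply (x : E) : inversion (0 : E) 1 x = (‖x‖ ^ 2)⁻¹ • x := by
  simp [inversion_def, one_div, inv_pow]

theorem image_inversion_compl_singleton_center (c : E) {R : ℝ} (hR : R ≠ 0) :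
    inversion c R '' {c}ᶜ = {c}ᶜ := by
  rw [(inversion_involutive c hR).image_eq_preimage_symm]
  ext x
  simp [inversion_eq_center hR]

variable [FiniteDimensional ℝ E]

theorem abs_det_reflection (K : Submodule ℝ E) [K.HasOrthogonalProjection] :
    |(K.reflection : E →L[ℝ] E).det| = 1 := by
  have h : |(K.reflection : E →L[ℝ] E).det| = |(-1) ^ finrank ℝ Kᗮ| :=
    congrArg abs K.det_reflection
  rw [h, abs_pow, abs_neg, abs_one, one_pow]

theorem abs_det_fderiv_inversion (c x : E) (R : ℝ) :
    |((R / dist x c) ^ 2 • ((ℝ ∙ (x - c))ᗮ.reflection : E →L[ℝ] E)).det| =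
      (R / dist x c) ^ (2 * finrank ℝ E) := by
  rw [ContinuousLinearMap.det, ContinuousLinearMap.toLinearMap_smul, LinearMap.det_smul, abs_mul,
    ← ContinuousLinearMap.det, abs_det_reflection, mul_one, abs_pow, abs_sq, pow_mul]

variable [MeasurableSpace E] [BorelSpace E] [Nontrivial E] (μ : Measure E) [μ.IsAddHaarMeasure]

theorem lintegral_inversion (c : E) {R : ℝ} (hR : R ≠ 0) (f : E → ℝ≥0∞) :
    ∫⁻ x, ENNReal.ofReal ((R / dist x c) ^ (2 * finrank ℝ E)) * f (inversion c R x) ∂μ =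
      ∫⁻ x, f x ∂μ := by
  have key := lintegral_image_eq_lintegral_abs_det_fderiv_mul μ
    (measurableSet_singleton c).compl
    (fun x hx ↦ (hasFDerivAt_inversion (R := R) hx).hasFDerivWithinAt)
    (inversion_involutive c hR).injective.injOn f
  simp only [image_inversion_compl_singleton_center c hR, restrict_compl_singleton,
    abs_det_fderiv_inversion] at key
  exact key.symm

end

theorem statement9_general (D : ℕ) (hD : 1 ≤ D)
    (f : EuclideanSpace ℝ (Fin D) → ℝ≥0∞) :
    (∫⁻ x : EuclideanSpace ℝ (Fin D),
        if x = 0 then 0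
        else f ((‖x‖ ^ 2)⁻¹ • x) * (ENNReal.ofReal ‖x‖) ^ (-(2 * (D : ℝ)))) =
      ∫⁻ x : EuclideanSpace ℝ (Fin D), f x := by
  have : Nontrivial (EuclideanSpace ℝ (Fin D)) :=
    Module.nontrivial_of_finrank_pos (R := ℝ) (by rw [finrank_euclideanSpace_fin]; omega)
  rw [← lintegral_inversion volume 0 one_ne_zero f]
  refine lintegral_congr fun x ↦ ?_
  rcases eq_or_ne x 0 with rfl | hx
  · -- the weight `(1 / dist 0 0) ^ (2 * D)` is `0 ^ (2 * D) = 0` because `1 / 0 = 0`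
    have : 2 * D ≠ 0 := by omega
    simp [this]
  · have hweight : ‖x‖ ^ (-(2 * (D : ℝ))) = (1 / ‖x‖) ^ (2 * D) := by
      rw [Real.rpow_neg (norm_nonneg x), one_div, inv_pow, ← Real.rpow_natCast]
      push_cast
      rfl
    rw [if_neg hx, mul_comm, finrank_euclideanSpace_fin, dist_zero_right, inversion_zero_one_apply,
      ENNReal.ofReal_rpow_of_pos (norm_pos_iff.2 hx), hweight]

/-- change of variables for the inversion `x ↦ x/‖x‖²` of `ℝ^D`,
whose Jacobian determinant has absolute value `‖x‖^(-2D)`:  for every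
measurable `f : ℝ^D → [0,∞]`,
`∫ f(x/‖x‖²)·‖x‖^(-2D) dx = ∫ f(x) dx` (the integrand on the left being
interpreted as `0` at `x = 0`). -/
theorem statement9 (D : ℕ) (hD : 1 ≤ D)
    (f : EuclideanSpace ℝ (Fin D) → ℝ≥0∞) (hf : Measurable f) :
    (∫⁻ x : EuclideanSpace ℝ (Fin D),
        if x = 0 then 0
        else f ((‖x‖ ^ 2)⁻¹ • x) * (ENNReal.ofReal ‖x‖) ^ (-(2 * (D : ℝ)))) =
      ∫⁻ x : EuclideanSpace ℝ (Fin D), f x :=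
  statement9_general D hD f
end

section
/- Let H be a weighted graph with three external vertices labelled 0,1,2, internal vertex set W, and set N_H = (Σ_{e∈E(H)} ν_e) − (D/(2λ))·|W|. Let (z₀,z₁,z₂) and (w₀,w₁,w₂) be two triples of pairwise distinct points of ℝ^D satisfying ‖z₂−z₀‖/‖z₁−z₀‖ = ‖w₂−w₀‖/‖w₁−w₀‖ and ‖z₂−z₁‖/‖z₁−z₀‖ = ‖w₂−w₁‖/‖w₁−w₀‖. Then ‖z₁−z₀‖^{2λN_H} · A_H(z₀,z₁,z₂) = ‖w₁−w₀‖^{2λN_H} · A_H(w₀,w₁,w₂) as an identity in [0,∞]; i.e. the normalized three-point Feynman integral depends only on the two distance ratios. -/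
noncomputable section

open MeasureTheory ENNReal

/-!
Two triangles with proportional sides are similar: by polarization the edge vectors
`z i - z 0` and `c⁻¹ • (w i - w 0)`, with `c = ‖w 1 - w 0‖ / ‖z 1 - z 0‖`, have the same Gram
matrix, so `w i = w 0 + c • A (z i - z 0)` for a linear isometry `A`. Substituting the same
similarity for every internal vertex, the Lebesgue measure picks up `c ^ (D |W|)` and the
propagator of an edge `e` picks up `c ^ (-2λν_e)`, so `A_H(w) = c ^ (-2λ N_H) A_H(z)`; this is
exactly compensated by `‖w 1 - w 0‖ ^ (2λ N_H) = c ^ (2λ N_H) ‖z 1 - z 0‖ ^ (2λ N_H)`.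
-/

open Module
open scoped RealInnerProductSpace

section Similarity

variable {V : Type*} [NormedAddCommGroup V] [InnerProductSpace ℝ V] [FiniteDimensional ℝ V]

theorem exists_linearIsometryEquiv_apply_eq_of_inner_eq {ι : Type*} [Fintype ι] {u v : ι → V}
    (h : ∀ i j, ⟪v i, v j⟫ = ⟪u i, u j⟫) : ∃ A : V ≃ₗᵢ[ℝ] V, ∀ i, A (u i) = v i := by
  let ψ := Fintype.linearCombination ℝ u
  let φ := Fintype.linearCombination ℝ v
  have norm_eq : ∀ a, ‖φ a‖ = ‖ψ a‖ := by
    intro a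
    simp only [φ, ψ, Fintype.linearCombination_apply]
    rw [← sq_eq_sq₀ (norm_nonneg _) (norm_nonneg _), ← real_inner_self_eq_norm_sq,
      ← real_inner_self_eq_norm_sq]
    simp only [sum_inner, inner_sum, real_inner_smul_left, real_inner_smul_right, h]
  have ker_le : LinearMap.ker ψ ≤ LinearMap.ker φ := fun a ha => by
    rw [LinearMap.mem_ker, ← norm_eq_zero, norm_eq, norm_eq_zero] at *
    exact ha
  -- the isometry `ψ a ↦ φ a` on the span of the `u i`
  let L : LinearMap.range ψ →ₗ[ℝ] V :=
    (LinearMap.ker ψ).liftQ φ ker_le ∘ₗ (LinearMap.quotKerEquivRange ψ).symm.toLinearMap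
  have L_apply : ∀ a, L ⟨ψ a, LinearMap.mem_range_self ψ a⟩ = φ a := fun a => by
    simp [L, LinearMap.quotKerEquivRange_symm_apply_image]
  let Li : LinearMap.range ψ →ₗᵢ[ℝ] V :=
    ⟨L, by rintro ⟨_, a, rfl⟩; exact (L_apply a).symm ▸ norm_eq a⟩
  classical
  refine ⟨Li.extend.toLinearIsometryEquiv rfl, fun i => ?_⟩
  have := (Li.extend_apply ⟨ψ (Pi.single i 1), LinearMap.mem_range_self ψ _⟩).trans
    (L_apply (Pi.single i 1))
  simpa [φ, ψ, Fintype.linearCombination_apply] using this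

theorem exists_linearIsometryEquiv_of_norm_sub_eq_mul {ι : Type*} [Fintype ι] {z w : ι → V}
    {c : ℝ} (hc : 0 < c) (h : ∀ i j, ‖w i - w j‖ = c * ‖z i - z j‖) (k : ι) :
    ∃ A : V ≃ₗᵢ[ℝ] V, ∀ i, w i = w k + c • A (z i - z k) := by
  set u : ι → V := fun i => z i - z k
  set v : ι → V := fun i => c⁻¹ • (w i - w k)
  have norm_sub : ∀ i j, ‖v i - v j‖ = ‖u i - u j‖ := fun i j => by
    simp only [u, v, ← smul_sub, sub_sub_sub_cancel_right, norm_smul, h, norm_inv,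
      Real.norm_of_nonneg hc.le, inv_mul_cancel_left₀ hc.ne']
  have norm_eq : ∀ i, ‖v i‖ = ‖u i‖ := fun i => by
    simpa [u, v] using norm_sub i k
  -- polarization: `2 ⟪x, y⟫ = ‖x‖² + ‖y‖² - ‖x - y‖²`
  obtain ⟨A, hA⟩ := exists_linearIsometryEquiv_apply_eq_of_inner_eq (u := u) (v := v) fun i j => by
    have hv := norm_sub_sq_real (v i) (v j)
    have hu := norm_sub_sq_real (u i) (u j)
    rw [norm_sub, norm_eq, norm_eq] at hv
    linarith
  refine ⟨A, fun i => ?_⟩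
  rw [hA, smul_inv_smul₀ hc.ne', add_sub_cancel]

theorem exists_linearIsometryEquiv_of_div_norm_sub_eq {z0 z1 z2 w0 w1 w2 : V}
    (hz01 : z0 ≠ z1) (hw01 : w0 ≠ w1)
    (hr1 : ‖z2 - z0‖ / ‖z1 - z0‖ = ‖w2 - w0‖ / ‖w1 - w0‖)
    (hr2 : ‖z2 - z1‖ / ‖z1 - z0‖ = ‖w2 - w1‖ / ‖w1 - w0‖) :
    ∃ A : V ≃ₗᵢ[ℝ] V, ∀ i, ![w0, w1, w2] i =
      w0 + (‖w1 - w0‖ / ‖z1 - z0‖) • A (![z0, z1, z2] i - z0) := by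
  have hz : 0 < ‖z1 - z0‖ := norm_pos_iff.mpr (sub_ne_zero.mpr hz01.symm)
  have hw : 0 < ‖w1 - w0‖ := norm_pos_iff.mpr (sub_ne_zero.mpr hw01.symm)
  have hc : 0 < ‖w1 - w0‖ / ‖z1 - z0‖ := div_pos hw hz
  have scale : ∀ {a a' : ℝ}, a / ‖z1 - z0‖ = a' / ‖w1 - w0‖ →
      a' = ‖w1 - w0‖ / ‖z1 - z0‖ * a := fun h => by
    rw [div_eq_div_iff hz.ne' hw.ne'] at h
    rw [div_mul_eq_mul_div, eq_div_iff hz.ne']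
    linear_combination -h
  have h10 := scale (a := ‖z1 - z0‖) (a' := ‖w1 - w0‖) (by rw [div_self hz.ne', div_self hw.ne'])
  have h20 := scale hr1
  have h21 := scale hr2
  generalize ‖w1 - w0‖ / ‖z1 - z0‖ = c at *
  refine exists_linearIsometryEquiv_of_norm_sub_eq_mul hc (fun i j => ?_) 0
  fin_cases i <;> fin_cases j <;>
    simp [norm_sub_rev w0, norm_sub_rev z0, norm_sub_rev w1 w2, norm_sub_rev z1 z2, h10, h20, h21]

end Similarity

section ChangeOfVariables

theorem lintegral_eq_ofReal_pow_finrank_mul_lintegral_comp_smul {F : Type*}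
    [NormedAddCommGroup F] [NormedSpace ℝ F] [FiniteDimensional ℝ F] [MeasurableSpace F]
    [BorelSpace F] (μ : Measure F) [μ.IsAddHaarMeasure] (f : F → ℝ≥0∞) {c : ℝ} (hc : 0 < c) :
    ∫⁻ x, f x ∂μ = ENNReal.ofReal c ^ finrank ℝ F * ∫⁻ x, f (c • x) ∂μ := by
  have hmap := μ.map_addHaar_smul (inv_ne_zero hc.ne')
  rw [inv_pow, inv_inv, abs_of_pos (by positivity)] at hmap
  rw [← ENNReal.ofReal_pow hc.le]
  calc ∫⁻ x, f x ∂μ = ∫⁻ x, f (c • c⁻¹ • x) ∂μ := by simp [smul_inv_smul₀ hc.ne']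
    _ = ∫⁻ x, f (c • x) ∂(μ.map (c⁻¹ • ·)) :=
      ((Homeomorph.smulOfNeZero c⁻¹ (inv_ne_zero hc.ne')).measurableEmbedding.lintegral_map
        (f <| c • ·)).symm
    _ = _ := by rw [hmap, lintegral_smul_measure, smul_eq_mul]

variable {E : Type*} [NormedAddCommGroup E] [InnerProductSpace ℝ E] [FiniteDimensional ℝ E]
  [MeasurableSpace E] [BorelSpace E] {W : Type*} [Fintype W]

theorem lintegral_pi_comp_linearIsometryEquiv (A : E ≃ₗᵢ[ℝ] E) (F : (W → E) → ℝ≥0∞) :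
    ∫⁻ y : W → E, F (fun v => A (y v)) = ∫⁻ y, F y :=
  (volume_preserving_pi fun _ => A.measurePreserving).lintegral_comp_emb
    (MeasurableEquiv.piCongrRight fun _ => A.toMeasurableEquiv).measurableEmbedding F

theorem lintegral_pi_eq_mul_lintegral_comp_similarity (A : E ≃ₗᵢ[ℝ] E) {c : ℝ} (hc : 0 < c)
    (s t : E) (F : (W → E) → ℝ≥0∞) :
    ∫⁻ x, F x = ENNReal.ofReal c ^ (finrank ℝ E * Fintype.card W) *
      ∫⁻ y : W → E, F (fun v => s + c • A (y v - t)) := by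
  have hfinrank : finrank ℝ (W → E) = finrank ℝ E * Fintype.card W := by
    simp [finrank_pi_fintype, mul_comm]
  calc ∫⁻ x, F x = ∫⁻ y : W → E, F (fun v => s + y v) :=
        (lintegral_add_left_eq_self F fun _ => s).symm
    _ = ENNReal.ofReal c ^ (finrank ℝ E * Fintype.card W) *
          ∫⁻ y : W → E, F (fun v => s + c • y v) := by
        rw [← hfinrank]
        exact lintegral_eq_ofReal_pow_finrank_mul_lintegral_comp_smul _
          (fun y : W → E => F fun v => s + y v) hc
    _ = ENNReal.ofReal c ^ (finrank ℝ E * Fintype.card W) *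
          ∫⁻ y : W → E, F (fun v => s + c • A (y v)) := by
        rw [lintegral_pi_comp_linearIsometryEquiv A fun y => F fun v => s + c • y v]
    _ = _ := by
        rw [← lintegral_sub_right_eq_self (fun y : W → E => F fun v => s + c • A (y v)) fun _ => t]
        rfl

end ChangeOfVariables

theorem ENNReal.prod_rpow_eq_rpow_sum {ι : Type*} (s : Finset ι) {a : ℝ≥0∞} (ha₀ : a ≠ 0)
    (ha : a ≠ ∞) (r : ι → ℝ) : ∏ i ∈ s, a ^ r i = a ^ ∑ i ∈ s, r i := by
  classical
  induction s using Finset.induction_on with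
  | empty => simp
  | insert i s hi ih =>
    rw [Finset.prod_insert hi, Finset.sum_insert hi, ENNReal.rpow_add _ _ ha₀ ha, ih]

section Propagator

variable {D : ℕ} (lam : ℕ) {c : ℝ}

theorem prp_eq_of_norm_sub_eq_mul (hc : 0 ≤ c) (ν : ℝ) {x y x' y' : EuclideanSpace ℝ (Fin D)}
    (h : ‖x' - y'‖ = c * ‖x - y‖) :
    prp lam ν x' y' = ENNReal.ofReal c ^ (-(2 * (lam : ℝ) * ν)) * prp lam ν x y := by
  rw [prp, prp, h, ENNReal.ofReal_mul hc, ENNReal.mul_rpow_of_ne_top ofReal_ne_top ofReal_ne_top]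

theorem prod_prp_comp_of_norm_sub_eq_mul (hc : 0 < c) {ι : Type*} [Fintype ι] (ν : ι → ℝ)
    {g : EuclideanSpace ℝ (Fin D) → EuclideanSpace ℝ (Fin D)}
    (hg : ∀ x y, ‖g x - g y‖ = c * ‖x - y‖) (a b : ι → EuclideanSpace ℝ (Fin D)) :
    ∏ i, prp lam (ν i) (g (a i)) (g (b i)) =
      ENNReal.ofReal c ^ (-(2 * (lam : ℝ) * ∑ i, ν i)) * ∏ i, prp lam (ν i) (a i) (b i) := by
  simp only [prp_eq_of_norm_sub_eq_mul lam hc.le _ (hg _ _), Finset.prod_mul_distrib,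
    ENNReal.prod_rpow_eq_rpow_sum _ (ENNReal.ofReal_pos.mpr hc).ne' ofReal_ne_top,
    Finset.mul_sum, Finset.sum_neg_distrib]

end Propagator

theorem FeynGraph.A_comp_similarity (lam D : ℕ) {N : ℕ} (H : FeynGraph N)
    (A : EuclideanSpace ℝ (Fin D) ≃ₗᵢ[ℝ] EuclideanSpace ℝ (Fin D)) {c : ℝ} (hc : 0 < c)
    (s t : EuclideanSpace ℝ (Fin D)) (z : Fin N → EuclideanSpace ℝ (Fin D)) :
    H.A lam D (fun i => s + c • A (z i - t)) =
      ENNReal.ofReal c ^ ((D : ℝ) * Fintype.card H.W - 2 * (lam : ℝ) * ∑ e, H.ν e) *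
        H.A lam D z := by
  set g := fun x => s + c • A (x - t)
  have hg : ∀ x y, ‖g x - g y‖ = c * ‖x - y‖ := fun x y => by
    rw [add_sub_add_left_eq_sub, ← smul_sub, ← A.map_sub, sub_sub_sub_cancel_right, norm_smul,
      A.norm_map, Real.norm_of_nonneg hc.le]
  have hq₀ : ENNReal.ofReal c ≠ 0 := (ENNReal.ofReal_pos.mpr hc).ne'
  have integrand : ∀ y : H.W → EuclideanSpace ℝ (Fin D),
      ∏ e, prp lam (H.ν e) (Sum.elim (g ∘ z) (g ∘ y) (H.ends e).1)
        (Sum.elim (g ∘ z) (g ∘ y) (H.ends e).2) =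
      ENNReal.ofReal c ^ (-(2 * (lam : ℝ) * ∑ e, H.ν e)) *
        ∏ e, prp lam (H.ν e) (Sum.elim z y (H.ends e).1) (Sum.elim z y (H.ends e).2) := fun y => by
    simp only [← Sum.comp_elim, Function.comp_apply]
    exact prod_prp_comp_of_norm_sub_eq_mul lam hc H.ν hg _ _
  calc H.A lam D (g ∘ z)
      = ENNReal.ofReal c ^ (D * Fintype.card H.W) * ∫⁻ y : H.W → EuclideanSpace ℝ (Fin D),
          (∏ e, prp lam (H.ν e) (Sum.elim (g ∘ z) (g ∘ y) (H.ends e).1)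
            (Sum.elim (g ∘ z) (g ∘ y) (H.ends e).2)) *
          ENNReal.ofReal (Real.pi ^ (-(D : ℝ) / 2)) ^ Fintype.card H.W := by
        rw [FeynGraph.A, lintegral_pi_eq_mul_lintegral_comp_similarity A hc s t,
          finrank_euclideanSpace_fin]
        rfl
    _ = ENNReal.ofReal c ^ (D * Fintype.card H.W) *
          (ENNReal.ofReal c ^ (-(2 * (lam : ℝ) * ∑ e, H.ν e)) * H.A lam D z) := by
        simp only [integrand, mul_assoc]
        rw [FeynGraph.A,
          lintegral_const_mul' _ _ (ENNReal.rpow_ne_top_of_ne_zero hq₀ ofReal_ne_top)]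
    _ = _ := by
        rw [← mul_assoc, ← ENNReal.rpow_natCast, ← ENNReal.rpow_add _ _ hq₀ ofReal_ne_top]
        push_cast
        ring_nf

theorem statement13_general (lam : ℕ) (hlam : 1 ≤ lam) (D : ℕ)
    (H : FeynGraph 3)
    (z0 z1 z2 w0 w1 w2 : EuclideanSpace ℝ (Fin D))
    (hz01 : z0 ≠ z1)
    (hw01 : w0 ≠ w1)
    (hr1 : ‖z2 - z0‖ / ‖z1 - z0‖ = ‖w2 - w0‖ / ‖w1 - w0‖)
    (hr2 : ‖z2 - z1‖ / ‖z1 - z0‖ = ‖w2 - w1‖ / ‖w1 - w0‖) :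
    (ENNReal.ofReal ‖z1 - z0‖) ^
        (2 * (lam : ℝ) *
          ((∑ e : H.E, H.ν e) - (D : ℝ) / (2 * (lam : ℝ)) * (Fintype.card H.W))) *
      H.A lam D ![z0, z1, z2] =
    (ENNReal.ofReal ‖w1 - w0‖) ^
        (2 * (lam : ℝ) *
          ((∑ e : H.E, H.ν e) - (D : ℝ) / (2 * (lam : ℝ)) * (Fintype.card H.W))) *
      H.A lam D ![w0, w1, w2] := by
  set T := 2 * (lam : ℝ) * ((∑ e, H.ν e) - (D : ℝ) / (2 * (lam : ℝ)) * Fintype.card H.W)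
  have hz : 0 < ‖z1 - z0‖ := norm_pos_iff.mpr (sub_ne_zero.mpr hz01.symm)
  set c := ‖w1 - w0‖ / ‖z1 - z0‖
  have hc : 0 < c := div_pos (norm_pos_iff.mpr (sub_ne_zero.mpr hw01.symm)) hz
  obtain ⟨A, hA⟩ := exists_linearIsometryEquiv_of_div_norm_sub_eq hz01 hw01 hr1 hr2
  have hexp : (D : ℝ) * Fintype.card H.W - 2 * (lam : ℝ) * ∑ e, H.ν e = -T := by
    have : (lam : ℝ) ≠ 0 := Nat.cast_ne_zero.mpr (Nat.one_le_iff_ne_zero.mp hlam)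
    simp only [T]
    field_simp
    ring
  have hq₀ : ENNReal.ofReal c ^ T ≠ 0 := by positivity
  have hq : ENNReal.ofReal c ^ T ≠ ∞ :=
    ENNReal.rpow_ne_top_of_ne_zero (ENNReal.ofReal_pos.mpr hc).ne' ofReal_ne_top
  rw [show ![w0, w1, w2] = _ from funext hA, H.A_comp_similarity lam D A hc, hexp,
    ← div_mul_cancel₀ ‖w1 - w0‖ hz.ne',
    ENNReal.ofReal_mul hc.le, ENNReal.mul_rpow_of_ne_top ofReal_ne_top ofReal_ne_top,
    ENNReal.rpow_neg, mul_mul_mul_comm, ENNReal.mul_inv_cancel hq₀ hq, one_mul]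

/-- the normalized three-point Feynman integral
`‖z₁-z₀‖^(2λN_H) · A_H(z₀,z₁,z₂)` depends only on the two distance ratios
`‖z₂-z₀‖/‖z₁-z₀‖` and `‖z₂-z₁‖/‖z₁-z₀‖`. -/
theorem statement13 (lam : ℕ) (hlam : 1 ≤ lam) (D : ℕ) (hD : D = 2 * lam + 2)
    (H : FeynGraph 3)
    (z0 z1 z2 w0 w1 w2 : EuclideanSpace ℝ (Fin D))
    (hz01 : z0 ≠ z1) (hz02 : z0 ≠ z2) (hz12 : z1 ≠ z2)
    (hw01 : w0 ≠ w1) (hw02 : w0 ≠ w2) (hw12 : w1 ≠ w2)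
    (hr1 : ‖z2 - z0‖ / ‖z1 - z0‖ = ‖w2 - w0‖ / ‖w1 - w0‖)
    (hr2 : ‖z2 - z1‖ / ‖z1 - z0‖ = ‖w2 - w1‖ / ‖w1 - w0‖) :
    (ENNReal.ofReal ‖z1 - z0‖) ^
        (2 * (lam : ℝ) *
          ((∑ e : H.E, H.ν e) - (D : ℝ) / (2 * (lam : ℝ)) * (Fintype.card H.W))) *
      H.A lam D ![z0, z1, z2] =
    (ENNReal.ofReal ‖w1 - w0‖) ^
        (2 * (lam : ℝ) *
          ((∑ e : H.E, H.ν e) - (D : ℝ) / (2 * (lam : ℝ)) * (Fintype.card H.W))) *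
      H.A lam D ![w0, w1, w2] :=
  statement13_general lam hlam D H z0 z1 z2 w0 w1 w2 hz01 hw01 hr1 hr2
end
end
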